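/- Suppose f : ℤ × ℤ → ℂ satisfies, for all m, n, t ∈ ℤ, both (t + m)·f(m,t) − t·f(m, n+t) = m·f(m+n, t) and f(m, n+t)·f(n,t) = f(n, m+t)·f(m,t). Then either f(m,n) = f(0,0) for all m, n ∈ ℤ, or f(0,0) = 0 and there exists d ∈ ℂ with f(m,−m) = d·m for all m and f(m,n) = 0 whenever m + n ≠ 0. -/

import Mathlib

/-!
Subtracting `c = f (0, 0)` makes the first relation homogeneous, with `g (0, 0) = 0`.
Its instances `n = -m` and `n = -t` say that `Ψ (m, t) = (m + t) g (m, t)` is invariant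
under the shears `(m, t) ↦ (m, t - m)` and `(m, t) ↦ (m - t, t)`, which generate `SL₂(ℤ)`;
the Euclidean algorithm moves every point to the axis `m = 0`, where `Ψ` vanishes. So `g`
vanishes off the antidiagonal, and on it the instance `(1, m - 1, -m)` gives
`g (m, -m) = m g (1, -1)`. The second relation at `(1, -2, 1)` then reads `3 c d = 0`
with `d = g (1, -1)`.
-/

theorem shear_iterate {α : Type*} {Ψ : ℤ → ℤ → α} (h : ∀ m t, Ψ m (t - m) = Ψ m t)
    (m t k : ℤ) : Ψ m (t - k * m) = Ψ m t := by
  induction k using Int.induction_on with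
  | zero => simp
  | succ k ih => rw [← ih, ← h m (t - k * m)]; congr 1; ring
  | pred k ih => rw [← ih, ← h m (t - (-k - 1) * m)]; congr 1; ring

theorem Int.natAbs_emod_lt (a : ℤ) {b : ℤ} (hb : b ≠ 0) : (a % b).natAbs < b.natAbs := by
  zify
  rw [abs_of_nonneg (Int.emod_nonneg a hb)]
  exact Int.emod_lt_abs a hb

theorem eq_zero_of_shear_invariant {α : Type*} [Zero α] {Ψ : ℤ → ℤ → α}
    (h₁ : ∀ m t, Ψ m (t - m) = Ψ m t) (h₂ : ∀ m t, Ψ (m - t) t = Ψ m t)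
    (h₀ : ∀ t, Ψ 0 t = 0) (m t : ℤ) : Ψ m t = 0 := by
  have h₂' (t m k : ℤ) : Ψ (m - k * t) t = Ψ m t :=
    shear_iterate (Ψ := fun t m => Ψ m t) (fun t m => h₂ m t) t m k
  have reduce₁ (m t : ℤ) : Ψ m t = Ψ m (t % m) := by
    rw [← shear_iterate h₁ m t (t / m), Int.emod_def, mul_comm]
  have reduce₂ (m t : ℤ) : Ψ m t = Ψ (m % t) t := by
    rw [← h₂' t m (m / t), Int.emod_def, mul_comm]
  have h_axis (m : ℤ) : Ψ m 0 = 0 := by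
    rw [← h₁, ← h₂' _ _ (-1), ← h₀ (0 - m)]; congr 1; ring
  induction hn : m.natAbs using Nat.strong_induction_on generalizing m t with
  | _ n ih =>
    rcases eq_or_ne m 0 with rfl | hm
    · exact h₀ t
    rcases eq_or_ne (t % m) 0 with hr | hr
    · rw [reduce₁, hr, h_axis]
    rw [reduce₁, reduce₂]
    exact ih _ (hn ▸ (Int.natAbs_emod_lt _ hr).trans (Int.natAbs_emod_lt _ hm)) _ _ rfl

/-- With `g (m, t)` the coefficient of `I(m) v_t`, this is `[L(n), I(m)] v_t = m I(m + n) v_t`. -/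
def BracketRelation {K : Type*} [Field K] (g : ℤ × ℤ → K) : Prop :=
  ∀ m n t : ℤ, (t + m) * g (m, t) - t * g (m, n + t) = m * g (m + n, t)

namespace BracketRelation

variable {K : Type*} [Field K] [CharZero K] {g : ℤ × ℤ → K}

theorem apply_zero_left
    (hg : BracketRelation g) (hg₀ : g (0, 0) = 0) (t : ℤ) : g (0, t) = 0 := by
  rcases eq_or_ne t 0 with rfl | ht
  · exact hg₀
  have h := hg 0 (-t) t
  rw [neg_add_cancel, hg₀] at h
  simpa [ht] using h

theorem apply_zero_right
    (hg : BracketRelation g) (hg₀ : g (0, 0) = 0) (m : ℤ) : g (m, 0) = 0 := by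
  rcases eq_or_ne m 0 with rfl | hm
  · exact hg₀
  have h := hg m (-m) 0
  rw [add_neg_cancel, hg₀] at h
  simpa [hm] using h

theorem add_mul_apply_eq_zero
    (hg : BracketRelation g) (hg₀ : g (0, 0) = 0) (m t : ℤ) : (m + t : K) * g (m, t) = 0 := by
  refine eq_zero_of_shear_invariant (Ψ := fun m t => (m + t : K) * g (m, t)) ?_ ?_ ?_ m t
  · intro a b
    have h := hg a (-a) b
    rw [add_neg_cancel, hg.apply_zero_left hg₀, neg_add_eq_sub] at h
    push_cast; linear_combination -h
  · intro a b
    have h := hg a (-b) b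
    rw [neg_add_cancel, hg.apply_zero_right hg₀, ← sub_eq_add_neg] at h
    push_cast; linear_combination -h
  · intro b
    simp [hg.apply_zero_left hg₀]

theorem apply_eq_zero_of_add_ne_zero
    (hg : BracketRelation g) (hg₀ : g (0, 0) = 0) {m t : ℤ}
    (hmt : m + t ≠ 0) : g (m, t) = 0 := by
  have h := hg.add_mul_apply_eq_zero hg₀ m t
  exact_mod_cast (mul_eq_zero.mp h).resolve_left (by exact_mod_cast hmt)

theorem apply_neg
    (hg : BracketRelation g) (hg₀ : g (0, 0) = 0) (m : ℤ) : g (m, -m) = m * g (1, -1) := by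
  have h := hg 1 (m - 1) (-m)
  have h₀ := hg.add_mul_apply_eq_zero hg₀ 1 (-m)
  rw [show m - 1 + -m = -1 by ring, add_sub_cancel] at h
  push_cast at h h₀ ⊢
  linear_combination -h + h₀

end BracketRelation

/-- Case I.3.3 (`b = 0`, `a = 0`) of Theorem 3.5: either `f` is constant, or
`f(0,0) = 0`, `f(m,−m) = d m` for some `d`, and `f(m,n) = 0` for `m + n ≠ 0`. -/
theorem stmt_8 (f : ℤ × ℤ → ℂ)
    (hf1 : ∀ m n t : ℤ,
      (t + m) * f (m, t) - t * f (m, n + t) = m * f (m + n, t))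
    (hf2 : ∀ m n t : ℤ, f (m, n + t) * f (n, t) = f (n, m + t) * f (m, t)) :
    (∀ m n : ℤ, f (m, n) = f (0, 0)) ∨
    (f (0, 0) = 0 ∧ ∃ d : ℂ,
      (∀ m : ℤ, f (m, -m) = d * m) ∧
      (∀ m n : ℤ, m + n ≠ 0 → f (m, n) = 0)) := by
  set c := f (0, 0)
  set d := f (1, -1) - c
  let g : ℤ × ℤ → ℂ := fun p => f p - c
  have hg : BracketRelation g := fun m n t => by
    simp only [g]; linear_combination hf1 m n t
  have hg₀ : g (0, 0) = 0 := sub_self c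
  have h_off {m n : ℤ} (h : m + n ≠ 0) : f (m, n) = c :=
    sub_eq_zero.mp (hg.apply_eq_zero_of_add_ne_zero hg₀ h)
  have h_diag (m : ℤ) : f (m, -m) = c + d * m := by
    linear_combination hg.apply_neg hg₀ m
  have h_cd : 3 * c * d = 0 := by
    have h := hf2 1 (-2) 1
    norm_num at h
    rw [h_off (m := -2) (n := 1) (by norm_num), h_off (m := 1) (n := 1) (by norm_num),
      show ((-2 : ℤ), (2 : ℤ)) = (-2, -(-2)) by norm_num, h_diag (-2),
      show f (1, -1) = c + d from (add_sub_cancel c _).symm] at h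
    linear_combination h
  by_cases hc : c = 0
  · exact .inr ⟨hc, d, fun m => by rw [h_diag, hc, zero_add], fun m n h => (h_off h).trans hc⟩
  · have hd : d = 0 := by simpa [hc] using h_cd
    refine .inl fun m n => ?_
    rcases eq_or_ne (m + n) 0 with h | h
    · rw [show n = -m by omega, h_diag, hd, zero_mul, add_zero]
    · exact h_off h
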